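/- Let G be a profinite group with descending q-central sequence G^(i). Then the restriction map H¹(G^(i), ℤ/q)^G → H¹(G^(i+1), ℤ/q)^G on G-invariant continuous homomorphisms to ℤ/q is the zero map, for all i ≥ 1. -/

import Mathlib

/-- The commutator convention of the paper: `[x,y] = x⁻¹y⁻¹xy`. -/
def pComm {G : Type*} [Group G] (x y : G) : G := x⁻¹ * y⁻¹ * x * y

/-- `H^q [H,G]` (abstract version): the subgroup generated by `q`-th powers of
elements of `H` and commutators `[h,g]`, `h ∈ H`, `g ∈ G`. -/
def qVerbal {G : Type*} [Group G] (q : ℕ) (H : Subgroup G) : Subgroup G :=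
  Subgroup.closure ({x : G | ∃ h ∈ H, x = h ^ q} ∪
    {x : G | ∃ h ∈ H, ∃ g : G, x = pComm h g})

/-- `H^q [H,G]` (topological version): the *closed* subgroup generated by
`q`-th powers of elements of `H` and commutators `[h,g]`, `h ∈ H`, `g ∈ G`. -/
def qVerbalC {G : Type*} [Group G] [TopologicalSpace G] [IsTopologicalGroup G]
    (q : ℕ) (H : Subgroup G) : Subgroup G :=
  (qVerbal q H).topologicalClosure

/-- The descending q-central sequence of closed subgroups; `qcsC q G i` is
`G^(i+1)` in the paper's (1-based) notation. -/
def qcsC (q : ℕ) (G : Type*) [Group G] [TopologicalSpace G] [IsTopologicalGroup G] :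
    ℕ → Subgroup G
  | 0 => ⊤
  | i + 1 => qVerbalC q (qcsC q G i)

theorem qVerbal_normal {G : Type*} [Group G] (q : ℕ) {H : Subgroup G} (hH : H.Normal) :
    (qVerbal q H).Normal := by
  constructor
  intro n hn g
  set S : Set G := {x : G | ∃ h ∈ H, x = h ^ q} ∪ {x : G | ∃ h ∈ H, ∃ g : G, x = pComm h g} with hS
  have himg : (MulAut.conj g) '' S ⊆ (Subgroup.closure S : Set G) := by
    rintro _ ⟨x, hx, rfl⟩
    rcases hx with ⟨h, hh, rfl⟩ | ⟨h, hh, g', rfl⟩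
    · have : (MulAut.conj g) (h ^ q) = (g * h * g⁻¹) ^ q := by
        simp [MulAut.conj_apply, conj_pow]
      rw [this]
      exact Subgroup.subset_closure (Or.inl ⟨g * h * g⁻¹, hH.conj_mem h hh g, rfl⟩)
    · have : (MulAut.conj g) (pComm h g') = pComm (g * h * g⁻¹) (g * g' * g⁻¹) := by
        simp only [MulAut.conj_apply, pComm]
        group
      rw [this]
      exact Subgroup.subset_closure
        (Or.inr ⟨g * h * g⁻¹, hH.conj_mem h hh g, g * g' * g⁻¹, rfl⟩)
  have h1 : (Subgroup.closure S).map (MulAut.conj g).toMonoidHom ≤ Subgroup.closure S := by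
    rw [MonoidHom.map_closure]
    exact (Subgroup.closure_le _).2 himg
  exact h1 ⟨n, hn, by simp [MulAut.conj_apply]⟩

instance qcsC_normal (q : ℕ) (G : Type*) [Group G] [TopologicalSpace G] [IsTopologicalGroup G]
    (i : ℕ) : (qcsC q G i).Normal := by
  induction i with
  | zero => exact ⟨fun n _ g => Subgroup.mem_top _⟩
  | succ i ih =>
    have := qVerbal_normal q ih
    exact Subgroup.is_normal_topologicalClosure (qVerbal q (qcsC q G i))

/-!
The kernel of a `G`-invariant homomorphism `φ : G^(i) → ℤ/q` contains every `q`-th power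
(`ℤ/q` has exponent `q`) and every commutator `[h, g] = h⁻¹ · h^g` with `h ∈ G^(i)`
(`φ` is constant on conjugacy classes). It is closed, being the kernel of a continuous map to
a discrete group inside the closed subgroup `G^(i)`, so it contains the closed subgroup
`G^(i+1)` generated by these elements.
-/

section
variable {G : Type*} [Group G]

theorem qVerbal_le {q : ℕ} {H K : Subgroup G} (hpow : ∀ h ∈ H, h ^ q ∈ K)
    (hcomm : ∀ h ∈ H, ∀ g, pComm h g ∈ K) : qVerbal q H ≤ K :=
  (Subgroup.closure_le K).2 <| Set.union_subset
    (by rintro _ ⟨h, hh, rfl⟩; exact hpow h hh)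
    (by rintro _ ⟨h, hh, g, rfl⟩; exact hcomm h hh g)

theorem qVerbal_le_map_ker {A : Type*} [Group A] {q : ℕ} (hA : Monoid.exponent A ∣ q)
    {H : Subgroup G} [H.Normal] (φ : H →* A)
    (hinv : ∀ (g : G) (x : H) (h : g * ↑x * g⁻¹ ∈ H), φ ⟨g * ↑x * g⁻¹, h⟩ = φ x) :
    qVerbal q H ≤ φ.ker.map H.subtype := by
  refine qVerbal_le (fun h hh => ⟨⟨h, hh⟩ ^ q, ?_, rfl⟩) (fun h hh g => ?_)
  · rw [SetLike.mem_coe, MonoidHom.mem_ker, map_pow]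
    exact Monoid.exponent_dvd_iff_forall_pow_eq_one.1 hA _
  · have hconj : g⁻¹ * h * g⁻¹⁻¹ ∈ H := Subgroup.Normal.conj_mem ‹_› h hh g⁻¹
    refine ⟨(⟨h, hh⟩ : H)⁻¹ * ⟨g⁻¹ * h * g⁻¹⁻¹, hconj⟩, ?_, ?_⟩
    · rw [SetLike.mem_coe, MonoidHom.mem_ker, map_mul, map_inv, hinv g⁻¹ ⟨h, hh⟩ hconj,
        inv_mul_cancel]
    · simp only [Subgroup.coe_subtype, Subgroup.coe_mul, InvMemClass.coe_inv, inv_inv, pComm]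
      group

end

theorem MonoidHom.isClosed_ker {H A : Type*} [Group H] [TopologicalSpace H] [Group A]
    [TopologicalSpace A] [T1Space A] (φ : H →* A) (hφ : Continuous φ) :
    IsClosed (φ.ker : Set H) :=
  isClosed_singleton.preimage hφ

theorem Subgroup.isClosed_map_subtype {G : Type*} [Group G] [TopologicalSpace G]
    {H : Subgroup G} (hH : IsClosed (H : Set G)) {K : Subgroup H} (hK : IsClosed (K : Set H)) :
    IsClosed (K.map H.subtype : Set G) := by
  rw [Subgroup.coe_map]
  exact (Topology.IsClosedEmbedding.subtypeVal (p := (· ∈ H)) hH).isClosedMap _ hK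

section
variable {G : Type*} [Group G] [TopologicalSpace G] [IsTopologicalGroup G]

theorem qcsC_isClosed (q : ℕ) : ∀ i, IsClosed (qcsC q G i : Set G)
  | 0 => isClosed_univ
  | i + 1 => (qVerbal q (qcsC q G i)).isClosed_topologicalClosure

theorem qcsC_succ_le_map_ker {A : Type*} [Group A] [TopologicalSpace A] [T1Space A] {q : ℕ}
    (hA : Monoid.exponent A ∣ q) (i : ℕ) (φ : qcsC q G i →* A) (hφ : Continuous φ)
    (hinv : ∀ (g : G) (x : qcsC q G i) (h : g * ↑x * g⁻¹ ∈ qcsC q G i),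
      φ ⟨g * ↑x * g⁻¹, h⟩ = φ x) :
    qcsC q G (i + 1) ≤ φ.ker.map (qcsC q G i).subtype :=
  Subgroup.topologicalClosure_minimal _ (qVerbal_le_map_ker hA φ hinv)
    (Subgroup.isClosed_map_subtype (qcsC_isClosed q i) (φ.isClosed_ker hφ))

end

theorem restriction_trivial_general {G : Type*} [Group G] [TopologicalSpace G] [IsTopologicalGroup G]
    (q : ℕ) (i : ℕ)
    (φ : ↥(qcsC q G i) →* Multiplicative (ZMod q))
    (hcont : @Continuous ↥(qcsC q G i) (Multiplicative (ZMod q)) _ ⊥ φ)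
    (hinv : ∀ (g : G) (x : ↥(qcsC q G i)) (h : g * ↑x * g⁻¹ ∈ qcsC q G i),
      φ ⟨g * ↑x * g⁻¹, h⟩ = φ x) :
    ∀ (y : G) (hy1 : y ∈ qcsC q G (i + 1)) (hy : y ∈ qcsC q G i), φ ⟨y, hy⟩ = 1 := by
  let _ : TopologicalSpace (Multiplicative (ZMod q)) := ⊥
  have : DiscreteTopology (Multiplicative (ZMod q)) := ⟨rfl⟩
  have hexp : Monoid.exponent (Multiplicative (ZMod q)) ∣ q :=
    (Monoid.exponent_multiplicative.trans (ZMod.exponent q)).dvd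
  intro y hy1 _
  obtain ⟨x, hx, rfl⟩ := qcsC_succ_le_map_ker hexp i φ hcont hinv hy1
  exact hx

/-- For a profinite group `G` and a prime power `q`, the restriction map
`H¹(G^(i), ℤ/q)^G → H¹(G^(i+1), ℤ/q)^G` is trivial for all `i ≥ 1`: every
`G`-invariant continuous homomorphism `G^(i) → ℤ/q` vanishes on `G^(i+1)`.
(Here `qcsC q G i` is the paper's `G^(i+1)`, so the statement ranges over all
terms of the descending q-central sequence of closed subgroups.) -/
theorem restriction_trivial {G : Type*} [Group G] [TopologicalSpace G] [IsTopologicalGroup G]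
    [CompactSpace G] [T2Space G] [TotallyDisconnectedSpace G]
    (p d q : ℕ) (hp : p.Prime) (hd : 1 ≤ d) (hq : q = p ^ d) (i : ℕ)
    (φ : ↥(qcsC q G i) →* Multiplicative (ZMod q))
    (hcont : @Continuous ↥(qcsC q G i) (Multiplicative (ZMod q)) _ ⊥ φ)
    (hinv : ∀ (g : G) (x : ↥(qcsC q G i)) (h : g * ↑x * g⁻¹ ∈ qcsC q G i),
      φ ⟨g * ↑x * g⁻¹, h⟩ = φ x) :
    ∀ (y : G) (hy1 : y ∈ qcsC q G (i + 1)) (hy : y ∈ qcsC q G i), φ ⟨y, hy⟩ = 1 :=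
  restriction_trivial_general q i φ hcont hinv
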